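/- Forced traveling waves: the F_max trichotomy for the B-model. Let W : ℝ³ → ℝ be a smooth, spherically symmetric Schwartz function with Ŵ(0) ≠ 0, and let G : (0,∞) → ℝ, G(s) := s^{−2} ∫₀^{4s²} ρ |Ŵ(√ρ)|² dρ, be the (normalized) friction force magnitude at speed s. Then G is continuous and strictly positive, G(s) → 0 as s → 0⁺ and as s → ∞, and F_max := sup_{s>0} G(s) is finite, positive and attained at some s_* ∈ (0,∞). Consequently: (1) for every f with 0 < f < F_max the equation G(s) = f has at least two distinct solutions s ∈ (0,∞) (one in (0, s_*) and one in (s_*, ∞)); (2) for f = F_max it has at least one solution; (3) for f > F_max it has no solution. Hence a constant external force of magnitude |F| < F_max admits (at least) two traveling-wave speeds, |F| = F_max admits one, and |F| > F_max admits none. -/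

import Mathlib

/- STATEMENT 12: Forced traveling waves — the F_max trichotomy for the B-model.
For W smooth, spherically symmetric Schwartz with Ŵ(0) ≠ 0, the friction force
magnitude G(s) = s⁻²∫₀^{4s²} ρ|Ŵ(√ρ)|² dρ is continuous and strictly positive on
(0,∞), tends to 0 as s → 0⁺ and as s → ∞, and F_max := sup_{s>0} G(s) is finite,
positive and attained at some s_* ∈ (0,∞).  Consequently:
(1) for 0 < f < F_max the equation G(s) = f has at least two solutions, one in
    (0,s_*) and one in (s_*,∞);
(2) for f = F_max it has at least one solution;
(3) for f > F_max it has none. -/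

open MeasureTheory Filter Topology ENNReal RealInnerProductSpace
open FourierTransform Real

noncomputable section

abbrev E3 := EuclideanSpace ℝ (Fin 3)

/-- Fourier transform  f̂(k) = ∫ e^{−ik·x} f(x) dx  of a real-valued function. -/
def ftR (f : E3 → ℝ) (k : E3) : ℂ :=
  ∫ x : E3, Complex.exp (-Complex.I * (⟪k, x⟫ : ℂ)) * (f x : ℂ)

/-- A fixed unit vector, used to evaluate radial Fourier transforms: Ŵ(r) = Ŵ(r e₁). -/
def e₁ : E3 := EuclideanSpace.single (0 : Fin 3) (1:ℝ)

/-- The normalized friction force magnitude  G(s) = s⁻² ∫₀^{4s²} ρ |Ŵ(√ρ)|² dρ. -/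
def G (W : E3 → ℝ) (s : ℝ) : ℝ :=
  (1 / s ^ 2) * ∫ ρ in (0:ℝ)..(4*s ^ 2), ρ * ‖ftR W (Real.sqrt ρ • e₁)‖ ^ 2

def Wc (W : SchwartzMap E3 ℝ) : SchwartzMap E3 ℂ where
  toFun x := (W x : ℂ)
  smooth' := Complex.ofRealCLM.contDiff.comp W.smooth'
  decay' := by
    intro k n
    obtain ⟨C, hC⟩ := W.decay' k n
    refine ⟨C, fun x => ?_⟩
    have h : (fun x => ((W x : ℝ) : ℂ)) = (Complex.ofRealLI ∘ ⇑W) := rfl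
    have h2 := Complex.ofRealLI.norm_iteratedFDeriv_comp_left (f := ⇑W) (x := x) W.smooth'.contDiffAt
      (i := n) (mod_cast le_top)
    show ‖x‖ ^ k * ‖iteratedFDeriv ℝ n (⇑Complex.ofRealLI ∘ ⇑W) x‖ ≤ C
    rw [h2]
    exact hC x

lemma ftR_eq (W : SchwartzMap E3 ℝ) (k : E3) :
    ftR (⇑W) k = (SchwartzMap.fourierTransformCLM ℂ (Wc W)) ((2 * Real.pi)⁻¹ • k) := by
  rw [SchwartzMap.fourierTransformCLM_apply]
  have h : ⇑(Wc W) = fun x => ((W x : ℝ) : ℂ) := rfl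
  rw [SchwartzMap.fourier_coe, h, Real.fourier_eq]
  unfold ftR
  congr 1
  funext v
  rw [Circle.smul_def, Real.fourierChar_apply, smul_eq_mul]
  congr 1
  have h2π : (2 * Real.pi) ≠ 0 := by positivity
  have hi : ⟪v, (2 * Real.pi)⁻¹ • k⟫ = (2 * Real.pi)⁻¹ * ⟪v, k⟫ := real_inner_smul_right _ _ _
  have : (2 * Real.pi * -(⟪v, (2 * Real.pi)⁻¹ • k⟫)) = -⟪k, v⟫ := by
    rw [hi, real_inner_comm v k]; field_simp
  rw [this]
  push_cast
  ring

lemma ftR_cont (W : SchwartzMap E3 ℝ) : Continuous (ftR ⇑W) := by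
  have h : ftR ⇑W = fun k => (SchwartzMap.fourierTransformCLM ℂ (Wc W)) ((2 * Real.pi)⁻¹ • k) := by
    funext k; exact ftR_eq W k
  rw [h]
  exact (SchwartzMap.fourierTransformCLM ℂ (Wc W)).continuous.comp (continuous_const_smul _)

lemma ftR_bound (W : SchwartzMap E3 ℝ) :
    ∃ D : ℝ, 0 < D ∧ (∀ k : E3, ‖ftR ⇑W k‖ ≤ D) ∧
      (∀ k : E3, ‖k‖ ^ 4 * ‖ftR ⇑W k‖ ≤ D) := by
  obtain ⟨C₀, hC₀pos, hC₀⟩ := (SchwartzMap.fourierTransformCLM ℂ (Wc W)).decay 0 0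
  obtain ⟨C₁, hC₁pos, hC₁⟩ := (SchwartzMap.fourierTransformCLM ℂ (Wc W)).decay 4 0
  have h2π : (0:ℝ) < 2 * Real.pi := by positivity
  refine ⟨C₀ + (2*Real.pi)^4 * C₁, by positivity, fun k => ?_, fun k => ?_⟩
  · rw [ftR_eq]
    have h := hC₀ ((2 * Real.pi)⁻¹ • k)
    simp only [pow_zero, one_mul, norm_iteratedFDeriv_zero] at h
    nlinarith [mul_pos (pow_pos h2π 4) hC₁pos]
  · rw [ftR_eq]
    have h := hC₁ ((2 * Real.pi)⁻¹ • k)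
    simp only [norm_iteratedFDeriv_zero] at h
    have hw : ‖(2*Real.pi)⁻¹ • k‖ = (2*Real.pi)⁻¹ * ‖k‖ := by
      rw [norm_smul, Real.norm_eq_abs, abs_of_pos (by positivity)]
    have h2 : ‖k‖ ^ 4 = (2*Real.pi)^4 * ‖(2*Real.pi)⁻¹ • k‖ ^ 4 := by
      rw [hw]; field_simp
    rw [h2, mul_assoc]
    have h3 := mul_le_mul_of_nonneg_left h (show (0:ℝ) ≤ (2*Real.pi)^4 by positivity)
    nlinarith [hC₀pos]


def phi (W : SchwartzMap E3 ℝ) : ℝ → ℝ :=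
  fun ρ => ρ * ‖ftR (⇑W) (Real.sqrt ρ • e₁)‖ ^ 2

lemma G_eq (W : SchwartzMap E3 ℝ) :
    G ⇑W = fun s => (1 / s ^ 2) * ∫ ρ in (0:ℝ)..(4*s ^ 2), phi W ρ := rfl

lemma phi_cont (W : SchwartzMap E3 ℝ) : Continuous (phi W) :=
  continuous_id.mul
    ((((ftR_cont W).comp (Real.continuous_sqrt.smul continuous_const)).norm).pow 2)

lemma phi_int (W : SchwartzMap E3 ℝ) (a b : ℝ) : IntervalIntegrable (phi W) volume a b :=
  (phi_cont W).intervalIntegrable a b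

lemma phi_nonneg (W : SchwartzMap E3 ℝ) {ρ : ℝ} (hρ : 0 ≤ ρ) : 0 ≤ phi W ρ :=
  mul_nonneg hρ (by positivity)

lemma norm_e₁ : ‖e₁‖ = 1 := by
  simp [e₁, EuclideanSpace.norm_single]

lemma norm_sqrt_smul (ρ : ℝ) : ‖Real.sqrt ρ • e₁‖ = Real.sqrt ρ := by
  rw [norm_smul, norm_e₁, mul_one, Real.norm_eq_abs, abs_of_nonneg (Real.sqrt_nonneg ρ)]

lemma phi_le_lin (W : SchwartzMap E3 ℝ) {D : ℝ} (hD : ∀ k, ‖ftR ⇑W k‖ ≤ D)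
    {ρ : ℝ} (hρ : 0 ≤ ρ) : phi W ρ ≤ D^2 * ρ := by
  have h := hD (Real.sqrt ρ • e₁)
  have hn := norm_nonneg (ftR ⇑W (Real.sqrt ρ • e₁))
  unfold phi
  have hsq : ‖ftR (⇑W) (Real.sqrt ρ • e₁)‖^2 ≤ D^2 := by nlinarith
  nlinarith [mul_le_mul_of_nonneg_left hsq hρ]

lemma phi_le_cub (W : SchwartzMap E3 ℝ) {D : ℝ} (hD : ∀ k, ‖k‖^4 * ‖ftR ⇑W k‖ ≤ D)
    {ρ : ℝ} (hρ : 1 ≤ ρ) : phi W ρ ≤ D^2 * ρ^(-3 : ℤ) := by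
  have h0 : (0:ℝ) ≤ ρ := by linarith
  have hk := hD (Real.sqrt ρ • e₁)
  rw [norm_sqrt_smul] at hk
  have h4 : (Real.sqrt ρ)^4 = ρ^2 := by
    rw [show (4:ℕ) = 2*2 from rfl, pow_mul, Real.sq_sqrt h0]
  rw [h4] at hk
  have hn := norm_nonneg (ftR ⇑W (Real.sqrt ρ • e₁))
  have hz : ρ^(-3:ℤ) = (ρ^3)⁻¹ := by
    rw [zpow_neg]; norm_cast
  rw [hz, ← div_eq_mul_inv, le_div_iff₀ (by positivity : (0:ℝ) < ρ^3)]
  unfold phi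
  have hDn : 0 ≤ ρ^2 * ‖ftR ⇑W (Real.sqrt ρ • e₁)‖ := by positivity
  nlinarith [mul_le_mul hk hk hDn (le_trans hDn hk)]

lemma G_contOn (W : SchwartzMap E3 ℝ) : ContinuousOn (G ⇑W) (Set.Ioi 0) := by
  rw [G_eq]
  apply ContinuousOn.mul
  · apply ContinuousOn.div continuousOn_const (continuous_pow 2).continuousOn
    intro s hs
    exact pow_ne_zero 2 (ne_of_gt hs)
  · exact ((intervalIntegral.continuous_primitive (phi_int W) 0).comp
      (by continuity : Continuous fun s : ℝ => 4*s ^ 2)).continuousOn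

lemma int_lin (W : SchwartzMap E3 ℝ) {D : ℝ} (hD : ∀ k, ‖ftR ⇑W k‖ ≤ D)
    {t : ℝ} (ht : 0 ≤ t) : (∫ ρ in (0:ℝ)..t, phi W ρ) ≤ D^2 * t^2 / 2 := by
  have h1 : (∫ ρ in (0:ℝ)..t, phi W ρ) ≤ ∫ ρ in (0:ℝ)..t, D^2 * ρ :=
    intervalIntegral.integral_mono_on ht (phi_int W 0 t)
      ((continuous_const.mul continuous_id).intervalIntegrable 0 t)
      (fun ρ hρ => phi_le_lin W hD hρ.1)
  have h2 : (∫ ρ in (0:ℝ)..t, D^2 * ρ) = D^2 * t^2/2 := by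
    rw [intervalIntegral.integral_const_mul, integral_id]; ring
  linarith

lemma int_cub (W : SchwartzMap E3 ℝ) {D : ℝ} (hD4 : ∀ k, ‖k‖^4 * ‖ftR ⇑W k‖ ≤ D)
    {t : ℝ} (ht : 1 ≤ t) : (∫ ρ in (1:ℝ)..t, phi W ρ) ≤ D^2 / 2 := by
  have h0 : (0:ℝ) ∉ Set.uIcc 1 t := by
    rw [Set.uIcc_of_le ht]
    simp only [Set.mem_Icc, not_and]
    intro h; linarith
  have hco : ContinuousOn (fun ρ : ℝ => D^2 * ρ^(-3:ℤ)) (Set.uIcc 1 t) := by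
    apply continuousOn_const.mul ((continuousOn_zpow₀ (-3)).mono ?_)
    intro x hx
    rw [Set.uIcc_of_le ht] at hx
    simp only [Set.mem_compl_iff, Set.mem_singleton_iff]
    intro h; rw [h] at hx; linarith [hx.1]
  have h1 : (∫ ρ in (1:ℝ)..t, phi W ρ) ≤ ∫ ρ in (1:ℝ)..t, D^2 * ρ^(-3:ℤ) :=
    intervalIntegral.integral_mono_on ht (phi_int W 1 t) hco.intervalIntegrable
      (fun ρ hρ => phi_le_cub W hD4 hρ.1)
  have h2 : (∫ ρ in (1:ℝ)..t, D^2 * ρ^(-3:ℤ)) = D^2 * ((t^(-2:ℤ) - 1)/(-2)) := by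
    rw [intervalIntegral.integral_const_mul, integral_zpow (Or.inr ⟨by norm_num, h0⟩)]
    norm_num
  have hz : (0:ℝ) ≤ t^(-2:ℤ) := zpow_nonneg (by linarith) _
  rw [h2] at h1
  nlinarith [mul_nonneg (sq_nonneg D) hz]

set_option maxHeartbeats 2000000 in
theorem forced_traveling_wave_trichotomy
    (W : SchwartzMap E3 ℝ)
    (hWrad : ∀ x y : E3, ‖x‖ = ‖y‖ → W x = W y)
    (hW0 : ftR (⇑W) 0 ≠ 0) :
    ContinuousOn (G (⇑W)) (Set.Ioi 0) ∧
    (∀ s : ℝ, 0 < s → 0 < G (⇑W) s) ∧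
    Tendsto (G (⇑W)) (𝓝[>] 0) (𝓝 0) ∧
    Tendsto (G (⇑W)) atTop (𝓝 0) ∧
    ∃ Fmax sstar : ℝ, 0 < Fmax ∧ 0 < sstar ∧
      G (⇑W) sstar = Fmax ∧
      (∀ s : ℝ, 0 < s → G (⇑W) s ≤ Fmax) ∧
      (∀ f : ℝ, 0 < f → f < Fmax →
        (∃ s₁ ∈ Set.Ioo 0 sstar, G (⇑W) s₁ = f) ∧
        (∃ s₂ ∈ Set.Ioi sstar, G (⇑W) s₂ = f)) ∧
      (∃ s : ℝ, 0 < s ∧ G (⇑W) s = Fmax) ∧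
      (∀ f : ℝ, Fmax < f → ¬ ∃ s : ℝ, 0 < s ∧ G (⇑W) s = f) := by
  obtain ⟨D, hDpos, hD0, hD4⟩ := ftR_bound W
  have hGc : ContinuousOn (G ⇑W) (Set.Ioi 0) := G_contOn W
  -- positivity
  have hGpos : ∀ s : ℝ, 0 < s → 0 < G ⇑W s := by
    intro s hs
    have hnorm : 0 < ‖ftR ⇑W 0‖ := norm_pos_iff.mpr hW0
    have hε : 0 < ‖ftR ⇑W 0‖ / 2 := by positivity
    have hev : ∀ᶠ k in 𝓝 (0:E3), ‖ftR ⇑W 0‖ / 2 < ‖ftR ⇑W k‖ :=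
      ((ftR_cont W).norm.tendsto 0).eventually (lt_mem_nhds (half_lt_self hnorm))
    obtain ⟨δ, hδ, hball⟩ := Metric.eventually_nhds_iff.mp hev
    set ε := ‖ftR ⇑W 0‖ / 2 with hεdef
    set c := min (4*s^2) (δ^2/4) with hcdef
    have hc : 0 < c := lt_min (by positivity) (by positivity)
    have hpt : ∀ ρ ∈ Set.Icc 0 c, ε^2 * ρ ≤ phi W ρ := by
      intro ρ hρ
      have hρδ : Real.sqrt ρ < δ := by
        have h1 : ρ ≤ δ^2/4 := hρ.2.trans (min_le_right _ _)
        have h2 : Real.sqrt ρ ≤ Real.sqrt (δ^2/4) := Real.sqrt_le_sqrt h1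
        rw [show δ^2/4 = (δ/2)^2 by ring, Real.sqrt_sq (by positivity)] at h2
        linarith
      have hdist : dist (Real.sqrt ρ • e₁) (0:E3) < δ := by
        rw [dist_zero_right, norm_sqrt_smul]; exact hρδ
      have hεn : ε < ‖ftR ⇑W (Real.sqrt ρ • e₁)‖ := hball hdist
      unfold phi
      have hsq : ε^2 ≤ ‖ftR ⇑W (Real.sqrt ρ • e₁)‖^2 := by nlinarith
      nlinarith [mul_le_mul_of_nonneg_right hsq hρ.1]
    have hsplit : (∫ ρ in (0:ℝ)..(4*s^2), phi W ρ)
        = (∫ ρ in (0:ℝ)..c, phi W ρ) + ∫ ρ in c..(4*s^2), phi W ρ :=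
      (intervalIntegral.integral_add_adjacent_intervals (phi_int W 0 c)
        (phi_int W c _)).symm
    have h2nd : 0 ≤ ∫ ρ in c..(4*s^2), phi W ρ :=
      intervalIntegral.integral_nonneg (min_le_left _ _)
        (fun u hu => phi_nonneg W (le_trans hc.le hu.1))
    have h1st : (∫ ρ in (0:ℝ)..c, ε^2 * ρ) ≤ ∫ ρ in (0:ℝ)..c, phi W ρ :=
      intervalIntegral.integral_mono_on hc.le
        ((continuous_const.mul continuous_id).intervalIntegrable 0 c)
        (phi_int W 0 c) hpt
    have hval : (∫ ρ in (0:ℝ)..c, ε^2 * ρ) = ε^2 * c^2/2 := by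
      rw [intervalIntegral.integral_const_mul, integral_id]; ring
    have hHpos : 0 < ∫ ρ in (0:ℝ)..(4*s^2), phi W ρ := by
      rw [hsplit]
      have : 0 < ε^2 * c^2/2 := by positivity
      linarith [hval ▸ h1st]
    rw [G_eq]
    exact mul_pos (by positivity) hHpos
  have hGnn : ∀ s : ℝ, 0 < s → 0 ≤ G ⇑W s := fun s hs => (hGpos s hs).le
  -- limit at 0⁺
  have ht0 : Tendsto (G ⇑W) (𝓝[>] 0) (𝓝 0) := by
    have hGle2 : ∀ s : ℝ, 0 < s → G ⇑W s ≤ 8*D^2*s^2 := by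
      intro s hs
      have h := int_lin W hD0 (show (0:ℝ) ≤ 4*s^2 by positivity)
      rw [G_eq]
      calc (1/s^2) * ∫ ρ in (0:ℝ)..(4*s^2), phi W ρ
          ≤ (1/s^2) * (D^2*(4*s^2)^2/2) := mul_le_mul_of_nonneg_left h (by positivity)
        _ = 8*D^2*s^2 := by field_simp; ring
    apply squeeze_zero' (eventually_nhdsWithin_of_forall (fun s hs => hGnn s hs))
      (eventually_nhdsWithin_of_forall (fun s hs => hGle2 s hs))
    have h : Tendsto (fun s : ℝ => 8*D^2*s^2) (𝓝[>] (0:ℝ)) (𝓝 (8*D^2*0^2)) :=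
      ((continuous_const.mul (continuous_pow 2)).tendsto 0).mono_left nhdsWithin_le_nhds
    simp at h; exact h
  -- limit at ∞
  have htop : Tendsto (G ⇑W) atTop (𝓝 0) := by
    have hGleInv : ∀ s : ℝ, 1 ≤ s → G ⇑W s ≤ D^2 * (s^2)⁻¹ := by
      intro s hs
      have hs0 : (0:ℝ) < s := by linarith
      have h1 : (1:ℝ) ≤ 4*s^2 := by nlinarith
      have hsplit : (∫ ρ in (0:ℝ)..(1:ℝ), phi W ρ) + (∫ ρ in (1:ℝ)..(4*s^2), phi W ρ)
          = ∫ ρ in (0:ℝ)..(4*s^2), phi W ρ :=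
        intervalIntegral.integral_add_adjacent_intervals (phi_int W 0 1) (phi_int W 1 _)
      have hA := int_lin W hD0 zero_le_one
      have hB := int_cub W hD4 h1
      have hH : (∫ ρ in (0:ℝ)..(4*s^2), phi W ρ) ≤ D^2 := by
        rw [← hsplit]; nlinarith
      rw [G_eq]
      calc (1/s^2) * ∫ ρ in (0:ℝ)..(4*s^2), phi W ρ
          ≤ (1/s^2) * D^2 := mul_le_mul_of_nonneg_left hH (by positivity)
        _ = D^2 * (s^2)⁻¹ := by ring
    apply squeeze_zero' ((eventually_ge_atTop 1).mono (fun s hs => hGnn s (by linarith)))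
      ((eventually_ge_atTop 1).mono (fun s hs => hGleInv s hs))
    have h : Tendsto (fun s : ℝ => D^2 * (s^2)⁻¹) atTop (𝓝 (D^2 * 0)) :=
      Tendsto.const_mul _ (tendsto_inv_atTop_zero.comp
        (tendsto_pow_atTop (n := 2) (by norm_num)))
    simpa using h
  refine ⟨hGc, hGpos, ht0, htop, ?_⟩
  -- the maximum
  have hc₁ : 0 < G ⇑W 1 := hGpos 1 one_pos
  obtain ⟨a, ha, haG0⟩ := Metric.eventually_nhds_iff.mp
    (eventually_nhdsWithin_iff.mp (ht0.eventually (gt_mem_nhds hc₁)))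
  have haG : ∀ s : ℝ, 0 < s → s < a → G ⇑W s < G ⇑W 1 := fun s h1 h2 =>
    haG0 (by rwa [Real.dist_eq, sub_zero, abs_of_pos h1]) h1
  have ha1 : a ≤ 1 := by
    by_contra h
    push_neg at h
    exact absurd (haG 1 one_pos h) (lt_irrefl _)
  obtain ⟨b, hbG⟩ := eventually_atTop.mp (htop.eventually (gt_mem_nhds hc₁))
  set b₀ := max b 1 with hb₀def
  have hb₀1 : (1:ℝ) ≤ b₀ := le_max_right _ _
  have hsub : Set.Icc (a/2) b₀ ⊆ Set.Ioi 0 := fun x hx => lt_of_lt_of_le (by linarith) hx.1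
  obtain ⟨sstar, hsmem, hsmax'⟩ := isCompact_Icc.exists_isMaxOn
    (Set.nonempty_Icc.mpr (by linarith)) (hGc.mono hsub)
  have hsmax : ∀ y ∈ Set.Icc (a/2) b₀, G ⇑W y ≤ G ⇑W sstar := fun y hy => hsmax' hy
  have h1mem : (1:ℝ) ∈ Set.Icc (a/2) b₀ := ⟨by linarith, hb₀1⟩
  have hFpos : 0 < G ⇑W sstar := lt_of_lt_of_le hc₁ (hsmax 1 h1mem)
  have hsstarpos : 0 < sstar := lt_of_lt_of_le (by linarith) hsmem.1
  have hglob : ∀ s : ℝ, 0 < s → G ⇑W s ≤ G ⇑W sstar := by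
    intro s hs
    rcases le_or_gt (a/2) s with h1 | h1
    · rcases le_or_gt s b₀ with h2 | h2
      · exact hsmax s ⟨h1, h2⟩
      · exact le_trans (hbG s (le_trans (le_max_left b 1) h2.le)).le (hsmax 1 h1mem)
    · exact le_trans (haG s hs (by linarith)).le (hsmax 1 h1mem)
  refine ⟨G ⇑W sstar, sstar, hFpos, hsstarpos, rfl, hglob, ?_, ⟨sstar, hsstarpos, rfl⟩, ?_⟩
  · -- two solutions
    intro f hf0 hff
    constructor
    · obtain ⟨a', ha', ha'G0⟩ := Metric.eventually_nhds_iff.mp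
        (eventually_nhdsWithin_iff.mp (ht0.eventually (gt_mem_nhds hf0)))
      have ha'G : ∀ s : ℝ, 0 < s → s < a' → G ⇑W s < f := fun s h1 h2 =>
        ha'G0 (by rwa [Real.dist_eq, sub_zero, abs_of_pos h1]) h1
      set p := min (a'/2) (sstar/2) with hpdef
      have hp0 : 0 < p := lt_min (by linarith) (by linarith)
      have hpa : p < a' := lt_of_le_of_lt (min_le_left _ _) (by linarith)
      have hps : p < sstar := lt_of_le_of_lt (min_le_right _ _) (by linarith)
      have hGp : G ⇑W p < f := ha'G p hp0 hpa
      have hsub2 : Set.Icc p sstar ⊆ Set.Ioi 0 := fun x hx => lt_of_lt_of_le hp0 hx.1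
      obtain ⟨s₁, hs₁mem, hs₁⟩ := intermediate_value_Icc hps.le (hGc.mono hsub2)
        ⟨hGp.le, hff.le⟩
      refine ⟨s₁, ⟨lt_of_lt_of_le hp0 hs₁mem.1, lt_of_le_of_ne hs₁mem.2 ?_⟩, hs₁⟩
      intro h
      rw [h] at hs₁
      exact (ne_of_gt hff) hs₁
    · obtain ⟨B, hB⟩ := eventually_atTop.mp (htop.eventually (gt_mem_nhds hf0))
      set q := max B sstar + 1 with hqdef
      have hq : sstar < q := lt_of_le_of_lt (le_max_right B sstar) (lt_add_one _)
      have hqB : B ≤ q := le_trans (le_max_left _ _) (le_add_of_nonneg_right zero_le_one)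
      have hGq : G ⇑W q < f := hB q hqB
      have hsub2 : Set.Icc sstar q ⊆ Set.Ioi 0 := fun x hx =>
        lt_of_lt_of_le hsstarpos hx.1
      obtain ⟨s₂, hmem, hs₂⟩ := intermediate_value_Icc' hq.le (hGc.mono hsub2)
        ⟨hGq.le, hff.le⟩
      refine ⟨s₂, lt_of_le_of_ne hmem.1 ?_, hs₂⟩
      intro h
      rw [← h] at hs₂
      exact (ne_of_gt hff) hs₂
  · -- no solutions above the max
    intro f hf h
    obtain ⟨s, hs, hGs⟩ := h
    have := hglob s hs
    rw [hGs] at this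
    linarith
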